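/- Derivative of the quaternion logarithm under a commutation hypothesis: let z⁰ ∈ ℍ be nonzero and g : ℍ → ℍ be a function with exp(g(z)) = z for all z in some neighborhood of z⁰ (so w := g(z⁰) satisfies exp w = z⁰). Suppose g is H-differentiable at z⁰ with H-derivative d, and suppose d · w = w · d. Then z⁰ · d = 1, i.e. d = (z⁰)⁻¹. -/

import Mathlib

open scoped Quaternion
open Filter Topology

/-- A function `f : ℍ → ℍ` is H-differentiable at `z₀` with H-derivative `d` if there exist
sequences of quaternions `A, B` with `∑ ‖A k‖ * ‖B k‖ < ∞` such that
`f (z₀ + h) - f z₀ = ∑' k, A k * h * B k + ω h` with `‖ω h‖ / ‖h‖ → 0` as `h → 0`,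
and `d = ∑' k, A k * B k`. -/
def HDiffAt (f : ℍ[ℝ] → ℍ[ℝ]) (z₀ d : ℍ[ℝ]) : Prop :=
  ∃ A B : ℕ → ℍ[ℝ],
    (Summable fun k => ‖A k‖ * ‖B k‖) ∧
    Filter.Tendsto
      (fun h : ℍ[ℝ] => ‖f (z₀ + h) - f z₀ - ∑' k, A k * h * B k‖ / ‖h‖)
      (𝓝[≠] (0 : ℍ[ℝ])) (𝓝 0) ∧
    d = ∑' k, A k * B k

/-- The quaternionic exponential, defined by its power series. -/
noncomputable def qexp (z : ℍ[ℝ]) : ℍ[ℝ] := ∑' n : ℕ, ((n.factorial : ℝ)⁻¹) • z ^ n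

/-!
An H-differentiable map is Fréchet differentiable, with derivative the sandwich operator
`h ↦ ∑ A k * h * B k`, which sends `1` to `d`. Differentiating `exp ∘ g = id` at `z₀` gives
`D exp (w) d = 1`. Since `d` commutes with `w`, `exp (w + t • d) = exp w * exp (t • d)`, so
`D exp (w) d = exp w * d = z₀ * d`.
-/

section Sandwich

open ContinuousLinearMap

variable (𝕜 : Type*) {R : Type*} [NontriviallyNormedField 𝕜] [NormedRing R] [NormedAlgebra 𝕜 R]

noncomputable def sandwichCLM (A B : ℕ → R) : R →L[𝕜] R :=
  ∑' k, mulLeftRight 𝕜 R (A k) (B k)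

variable {𝕜} [CompleteSpace R] {A B : ℕ → R}

theorem summable_mulLeftRight (hAB : Summable fun k => ‖A k‖ * ‖B k‖) :
    Summable fun k => mulLeftRight 𝕜 R (A k) (B k) :=
  hAB.of_norm_bounded fun _ => opNorm_mulLeftRight_apply_apply_le 𝕜 R _ _

theorem sandwichCLM_apply (hAB : Summable fun k => ‖A k‖ * ‖B k‖) (h : R) :
    sandwichCLM 𝕜 A B h = ∑' k, A k * h * B k := by
  rw [sandwichCLM, ← apply_apply (v := h),
    ContinuousLinearMap.map_tsum _ (summable_mulLeftRight hAB)]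
  simp only [apply_apply, mulLeftRight_apply]

end Sandwich

theorem hasFDerivAt_of_tendsto_nhdsNE {𝕜 E F : Type*} [NontriviallyNormedField 𝕜]
    [NormedAddCommGroup E] [NormedSpace 𝕜 E] [NormedAddCommGroup F] [NormedSpace 𝕜 F]
    {f : E → F} {L : E →L[𝕜] F} {x : E}
    (h : Tendsto (fun v => ‖f (x + v) - f x - L v‖ / ‖v‖) (𝓝[≠] 0) (𝓝 0)) :
    HasFDerivAt f L x := by
  rw [hasFDerivAt_iff_isLittleO_nhds_zero, ← nhdsNE_sup_pure, Asymptotics.isLittleO_sup,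
    Asymptotics.isLittleO_pure, ← Asymptotics.isLittleO_norm_norm]
  exact ⟨(Asymptotics.isLittleO_iff_tendsto fun v hv => by simp [norm_eq_zero.1 hv]).2 h, by simp⟩

theorem HDiffAt.hasFDerivAt {g : ℍ[ℝ] → ℍ[ℝ]} {z₀ d : ℍ[ℝ]} (hg : HDiffAt g z₀ d) :
    ∃ L : ℍ[ℝ] →L[ℝ] ℍ[ℝ], HasFDerivAt g L z₀ ∧ L 1 = d := by
  obtain ⟨A, B, hAB, hrem, rfl⟩ := hg
  refine ⟨sandwichCLM ℝ A B, hasFDerivAt_of_tendsto_nhdsNE ?_, ?_⟩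
  · simpa only [sandwichCLM_apply hAB] using hrem
  · simp only [sandwichCLM_apply hAB, mul_one]

theorem qexp_eq_exp : qexp = NormedSpace.exp := by
  funext z
  rw [NormedSpace.exp_eq_tsum ℝ]
  rfl

theorem fderiv_exp_apply_of_commute {𝕂 𝔸 : Type*} [RCLike 𝕂] [NormedRing 𝔸] [NormedAlgebra 𝕂 𝔸]
    [CompleteSpace 𝔸] {x y : 𝔸} (hxy : Commute x y) :
    fderiv 𝕂 NormedSpace.exp x y = NormedSpace.exp x * y := by
  have hline : HasDerivAt (fun t : 𝕂 => x + t • y) y 0 := by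
    simpa using ((hasDerivAt_id (0 : 𝕂)).smul_const y).const_add x
  have hchain : HasDerivAt (fun t : 𝕂 => NormedSpace.exp (x + t • y))
      (fderiv 𝕂 NormedSpace.exp x y) 0 := by
    have := (NormedSpace.exp_analytic (𝕂 := 𝕂) x).differentiableAt.hasFDerivAt
    exact (by simpa using this : HasFDerivAt _ _ (x + (0 : 𝕂) • y)).comp_hasDerivAt 0 hline
  have hsplit : (fun t : 𝕂 => NormedSpace.exp (x + t • y))
      = fun t => NormedSpace.exp x * NormedSpace.exp (t • y) := by
    have hball : ∀ z : 𝔸, z ∈ Metric.eball (0 : 𝔸) (NormedSpace.expSeries 𝕂 𝔸).radius := fun z =>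
      (NormedSpace.expSeries_radius_eq_top 𝕂 𝔸).symm ▸ edist_lt_top _ _
    funext t
    exact NormedSpace.exp_add_of_commute_of_mem_ball (hxy.smul_right t) (hball _) (hball _)
  have hcurve : HasDerivAt (fun t : 𝕂 => NormedSpace.exp (x + t • y))
      (NormedSpace.exp x * y) 0 := by
    rw [hsplit]
    simpa using (hasDerivAt_exp_smul_const (𝕂 := 𝕂) y 0).const_mul (NormedSpace.exp x)
  exact hchain.unique hcurve

theorem hDeriv_log_general (z₀ : ℍ[ℝ]) (g : ℍ[ℝ] → ℍ[ℝ])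
    (hexp : ∀ᶠ z in 𝓝 z₀, qexp (g z) = z) (d : ℍ[ℝ]) (hg : HDiffAt g z₀ d)
    (hcomm : d * g z₀ = g z₀ * d) :
    z₀ * d = 1 ∧ d = z₀⁻¹ := by
  obtain ⟨L, hgL, hL1⟩ := hg.hasFDerivAt
  rw [qexp_eq_exp] at hexp
  have hchain : (fderiv ℝ NormedSpace.exp (g z₀)).comp L = ContinuousLinearMap.id ℝ ℍ[ℝ] :=
    ((NormedSpace.exp_analytic (𝕂 := ℝ) (g z₀)).differentiableAt.hasFDerivAt.comp z₀ hgL).unique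
      ((hasFDerivAt_id z₀).congr_of_eventuallyEq hexp)
  have hzd : z₀ * d = 1 := by
    rw [← hexp.self_of_nhds, ← fderiv_exp_apply_of_commute (𝕂 := ℝ) hcomm.symm, ← hL1]
    exact congr($hchain 1)
  exact ⟨hzd, eq_inv_of_mul_eq_one_right hzd⟩

/-- H-derivative of the quaternion logarithm under a commutation hypothesis: if
`qexp (g z) = z` near `z⁰ ≠ 0`, `g` is H-differentiable at `z⁰` with H-derivative `d`,
and `d` commutes with `w = g z⁰`, then `z⁰ * d = 1`, i.e. `d = (z⁰)⁻¹`. -/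
theorem hDeriv_log (z₀ : ℍ[ℝ]) (hz₀ : z₀ ≠ 0) (g : ℍ[ℝ] → ℍ[ℝ])
    (hexp : ∀ᶠ z in 𝓝 z₀, qexp (g z) = z) (d : ℍ[ℝ]) (hg : HDiffAt g z₀ d)
    (hcomm : d * g z₀ = g z₀ * d) :
    z₀ * d = 1 ∧ d = z₀⁻¹ :=
  hDeriv_log_general z₀ g hexp d hg hcomm
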